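/- Let X = {x ∈ ℝⁿ : A x ≤ b} be a nonempty bounded polyhedron and c ∈ ℝⁿ, and suppose the linear program min_{x ∈ X} c·x has a unique optimal solution x⋆. Fix x⁰ ∈ ℝⁿ and let θ ≥ θ_c, where θ_c > 0 is such that P_X(x⁰ − θ c) = x⋆ for all θ ≥ θ_c. Set b^c = b − A(x⁰ − θ c), Ā_c = [A | −b^c], K_c = { Ā_cᵀ u : u ∈ ℝᵐ, u ≥ 0 } ⊆ ℝⁿ⁺¹, ē = (0,…,0,1), z⋆ = P_{K_c}(ē), and γ = ‖z⋆ − ē‖. Then γ > 0, (ē − z⋆)/γ² = (y, 1) for some y ∈ ℝⁿ, and x⋆ = y + x⁰ − θ c. -/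

import Mathlib

/-!
Write `x̂ = x⁰ − θ c`, `P = {v : A v ≤ b^c} = X − x̂`, and `r = ē − z⋆`. By Moreau's decomposition
`r` is orthogonal to `z⋆` and lies in the polar cone `K_c° = {(w, t) : A w ≤ t b^c}`, so its last
coordinate is `⟪r, ē⟫ = ‖r‖² = γ²`; and `γ > 0` because `(x⋆ − x̂, 1) ∈ K_c°` pairs positively with
`ē`, so `ē ∉ K_c`. Writing `r = (w, γ²)` and `y = w / γ²`, we get `y ∈ P`, and testing `z⋆` against
`(v, 1) ∈ K_c°` gives `⟪w, v⟫ ≥ 1 − γ² = ‖w‖² / γ²`, i.e. `⟪y, v − y⟫ ≥ 0` on `P`. Hence `y` is the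
point of `P` nearest to `0`, so `y + x̂` is the point of `X` nearest to `x̂`, which is `x⋆`.
-/

open scoped RealInnerProductSpace
open Matrix

section NearestPoint

variable {E : Type*} [NormedAddCommGroup E] [InnerProductSpace ℝ E]

theorem inner_sub_nonpos_of_forall_dist_le {K : Set E} (hK : Convex ℝ K) {u v : E} (hv : v ∈ K)
    (hmin : ∀ w ∈ K, dist u v ≤ dist u w) : ∀ w ∈ K, ⟪u - v, w - v⟫ ≤ 0 := by
  have : Nonempty K := ⟨⟨v, hv⟩⟩
  rw [← norm_eq_iInf_iff_real_inner_le_zero hK hv]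
  refine le_antisymm (le_ciInf fun w => by simpa [dist_eq_norm] using hmin w w.2) ?_
  exact ciInf_le (f := fun w : K => ‖u - w‖) ⟨0, by rintro _ ⟨w, rfl⟩; positivity⟩ ⟨v, hv⟩

theorem eq_of_inner_sub_nonpos {u a b : E} (ha : ⟪u - a, b - a⟫ ≤ 0) (hb : ⟪u - b, a - b⟫ ≤ 0) :
    a = b := by
  have h : ⟪a - b, a - b⟫ = ⟪u - b, a - b⟫ + ⟪u - a, b - a⟫ := by
    rw [← neg_sub a b, inner_neg_right, ← sub_eq_add_neg, ← inner_sub_left,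
      sub_sub_sub_cancel_left]
  exact sub_eq_zero.mp <| inner_self_eq_zero.mp <|
    le_antisymm (h ▸ add_nonpos hb ha) real_inner_self_nonneg

namespace ConvexCone

theorem inner_sub_nearest_self_eq_zero (K : ConvexCone ℝ E) {e z : E} (hz : z ∈ K)
    (hmin : ∀ k ∈ K, dist e z ≤ dist e k) : ⟪e - z, z⟫ = 0 := by
  have hvi := inner_sub_nonpos_of_forall_dist_le K.convex hz hmin
  have h2 := hvi ((2 : ℝ) • z) (K.smul_mem two_pos hz)
  have hhalf := hvi ((2⁻¹ : ℝ) • z) (K.smul_mem (by norm_num) hz)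
  have hsub : ∀ t : ℝ, t • z - z = (t - 1) • z := fun t => by rw [sub_smul, one_smul]
  rw [hsub, inner_smul_right] at h2 hhalf
  norm_num at h2 hhalf
  linarith

theorem inner_sub_nearest_nonpos (K : ConvexCone ℝ E) {e z : E} (hz : z ∈ K)
    (hmin : ∀ k ∈ K, dist e z ≤ dist e k) : ∀ k ∈ K, ⟪e - z, k⟫ ≤ 0 := by
  intro k hk
  simpa [inner_sub_right, inner_sub_nearest_self_eq_zero K hz hmin] using
    inner_sub_nonpos_of_forall_dist_le K.convex hz hmin k hk

theorem inner_sub_nearest_eq_norm_sq (K : ConvexCone ℝ E) {e z : E} (hz : z ∈ K)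
    (hmin : ∀ k ∈ K, dist e z ≤ dist e k) : ⟪e - z, e⟫ = ‖e - z‖ ^ 2 := by
  rw [← real_inner_self_eq_norm_sq, ← add_zero ⟪e - z, e - z⟫,
    ← inner_sub_nearest_self_eq_zero K hz hmin, ← inner_add_right, sub_add_cancel]

end ConvexCone

end NearestPoint

namespace EuclideanSpace

variable {n : ℕ}

def snoc (w : EuclideanSpace ℝ (Fin n)) (t : ℝ) : EuclideanSpace ℝ (Fin (n + 1)) :=
  WithLp.toLp 2 (Fin.snoc w.ofLp t)

theorem inner_snoc_snoc (v w : EuclideanSpace ℝ (Fin n)) (s t : ℝ) :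
    ⟪snoc v s, snoc w t⟫ = ⟪v, w⟫ + s * t := by
  simp [snoc, PiLp.inner_apply, Fin.sum_univ_castSucc, mul_comm]

theorem smul_snoc (c : ℝ) (w : EuclideanSpace ℝ (Fin n)) (t : ℝ) :
    c • snoc w t = snoc (c • w) (c * t) := by
  ext i
  induction i using Fin.lastCases <;> simp [snoc]

theorem exists_eq_snoc (r : EuclideanSpace ℝ (Fin (n + 1))) : ∃ w t, r = snoc w t :=
  ⟨WithLp.toLp 2 (Fin.init r.ofLp), r (Fin.last n), by simp [snoc, Fin.snoc_init_self]⟩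

theorem single_last_eq_snoc : single (Fin.last n) (1 : ℝ) = snoc 0 1 := by
  ext i
  induction i using Fin.lastCases with
  | last => simp [snoc]
  | cast j => simp [snoc, (Fin.castSucc_lt_last j).ne]

theorem mulVec_snoc {ι : Type*} (A : Matrix ι (Fin n) ℝ) (d : ι → ℝ)
    (w : EuclideanSpace ℝ (Fin n)) (t : ℝ) :
    (of fun i => Fin.snoc (A i) (d i)) *ᵥ snoc w t = A *ᵥ w + t • d := by
  ext i
  simp [snoc, mulVec, dotProduct, Fin.sum_univ_castSucc, mul_comm]

end EuclideanSpace

def rowCone {ι κ : Type*} [Fintype ι] (M : Matrix ι κ ℝ) :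
    PointedCone ℝ (EuclideanSpace ℝ κ) where
  carrier := {z | ∃ u : ι → ℝ, 0 ≤ u ∧ z = (WithLp.equiv 2 (κ → ℝ)).symm (Mᵀ *ᵥ u)}
  add_mem' := by
    rintro _ _ ⟨u, hu, rfl⟩ ⟨u', hu', rfl⟩
    exact ⟨u + u', add_nonneg hu hu', by simp [mulVec_add]⟩
  zero_mem' := ⟨0, le_rfl, by simp⟩
  smul_mem' := by
    rintro ⟨c, hc⟩ _ ⟨u, hu, rfl⟩
    exact ⟨c • u, smul_nonneg hc hu, by simp [mulVec_smul]⟩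

theorem inner_toLp_transpose_mulVec {ι κ : Type*} [Fintype ι] [Fintype κ] (M : Matrix ι κ ℝ)
    (v : EuclideanSpace ℝ κ) (u : ι → ℝ) :
    ⟪v, (WithLp.equiv 2 (κ → ℝ)).symm (Mᵀ *ᵥ u)⟫ = u ⬝ᵥ (M *ᵥ v) := by
  simp [EuclideanSpace.inner_eq_star_dotProduct, dotProduct_mulVec, vecMul_transpose,
    dotProduct_comm]

theorem forall_inner_rowCone_nonpos_iff {ι κ : Type*} [Fintype ι] [Fintype κ] [DecidableEq ι]
    (M : Matrix ι κ ℝ) (v : EuclideanSpace ℝ κ) :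
    (∀ z ∈ rowCone M, ⟪v, z⟫ ≤ 0) ↔ M *ᵥ v ≤ 0 := by
  constructor
  · intro h i
    have hi := h _ ⟨Pi.single i 1, Pi.single_nonneg.mpr zero_le_one, rfl⟩
    rwa [inner_toLp_transpose_mulVec, single_dotProduct, one_mul] at hi
  · rintro h _ ⟨u, hu, rfl⟩
    rw [inner_toLp_transpose_mulVec, ← dotProduct_zero u]
    exact dotProduct_le_dotProduct_of_nonneg_left h hu

theorem convex_setOf_mulVec_le {ι κ : Type*} [Fintype κ] (A : Matrix ι κ ℝ) (b : ι → ℝ) :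
    Convex ℝ {x : EuclideanSpace ℝ κ | A *ᵥ x ≤ b} :=
  (convex_Iic b).is_linear_preimage
    ⟨fun x y => by simp [mulVec_add], fun c x => by simp [mulVec_smul]⟩

theorem mulVec_sub_le_sub_mulVec_iff {ι κ : Type*} [Fintype κ] (A : Matrix ι κ ℝ) (b : ι → ℝ)
    (x x₀ : EuclideanSpace ℝ κ) : A *ᵥ (x - x₀) ≤ b - A *ᵥ x₀ ↔ A *ᵥ x ≤ b := by
  rw [mulVec_sub, sub_le_sub_iff_right]

/-- `[A | -d]`: its polar cone is `{(w, t) : A w ≤ t d}`, whose slice `t = 1` is `{v : A v ≤ d}`. -/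
def homogenizedMatrix {ι : Type*} {n : ℕ} (A : Matrix ι (Fin n) ℝ) (d : ι → ℝ) :
    Matrix ι (Fin (n + 1)) ℝ :=
  of fun i => Fin.snoc (A i) (-d i)

section Homogenization

open EuclideanSpace

variable {ι : Type*} [Fintype ι] [DecidableEq ι] {n : ℕ} (A : Matrix ι (Fin n) ℝ) (d : ι → ℝ)

theorem forall_inner_snoc_nonpos_iff (w : EuclideanSpace ℝ (Fin n)) (t : ℝ) :
    (∀ z ∈ rowCone (homogenizedMatrix A d), ⟪snoc w t, z⟫ ≤ 0) ↔ A *ᵥ w ≤ t • d := by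
  rw [forall_inner_rowCone_nonpos_iff, homogenizedMatrix, mulVec_snoc]
  change A *ᵥ w + t • -d ≤ 0 ↔ _
  rw [smul_neg, ← sub_eq_add_neg, sub_nonpos]

theorem single_last_notMem_rowCone (hP : ∃ v : EuclideanSpace ℝ (Fin n), A *ᵥ v ≤ d) :
    single (Fin.last n) 1 ∉ rowCone (homogenizedMatrix A d) := by
  obtain ⟨v, hv⟩ := hP
  intro he
  have h := (forall_inner_snoc_nonpos_iff A d v 1).2 (by rwa [one_smul]) _ he
  rw [single_last_eq_snoc, inner_snoc_snoc, inner_zero_right] at h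
  norm_num at h

theorem exists_minNorm_of_nearest_rowCone (hP : ∃ v : EuclideanSpace ℝ (Fin n), A *ᵥ v ≤ d)
    {z : EuclideanSpace ℝ (Fin (n + 1))} (hz : z ∈ rowCone (homogenizedMatrix A d))
    (hmin : ∀ k ∈ rowCone (homogenizedMatrix A d),
      dist (single (Fin.last n) 1) z ≤ dist (single (Fin.last n) 1) k) :
    0 < ‖z - single (Fin.last n) 1‖ ∧ ∃ y : EuclideanSpace ℝ (Fin n),
      (‖z - single (Fin.last n) 1‖ ^ 2)⁻¹ • (single (Fin.last n) 1 - z) = snoc y 1 ∧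
      A *ᵥ y ≤ d ∧ ∀ v : EuclideanSpace ℝ (Fin n), A *ᵥ v ≤ d → 0 ≤ ⟪y, v - y⟫ := by
  set e : EuclideanSpace ℝ (Fin (n + 1)) := single (Fin.last n) 1 with he
  set K := (rowCone (homogenizedMatrix A d)).toConvexCone
  have hγ : 0 < ‖z - e‖ :=
    norm_pos_iff.2 (sub_ne_zero.2 (ne_of_mem_of_not_mem hz (single_last_notMem_rowCone A d hP)))
  obtain ⟨w, s, hr⟩ := exists_eq_snoc (e - z)
  have hs : s = ‖z - e‖ ^ 2 := by
    rw [norm_sub_rev, ← K.inner_sub_nearest_eq_norm_sq hz hmin, hr, he, single_last_eq_snoc,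
      inner_snoc_snoc, inner_zero_right, zero_add, mul_one]
  have hs0 : 0 < s := hs ▸ pow_pos hγ 2
  have hww : ⟪w, w⟫ = s - s ^ 2 := by
    have h := real_inner_self_eq_norm_sq (e - z)
    rw [norm_sub_rev, ← hs, hr, inner_snoc_snoc] at h
    linarith
  have hAw : A *ᵥ w ≤ s • d := by
    refine (forall_inner_snoc_nonpos_iff A d w s).1 fun k hk => ?_
    rw [← hr]
    exact K.inner_sub_nearest_nonpos hz hmin k hk
  have hwv : ∀ v : EuclideanSpace ℝ (Fin n), A *ᵥ v ≤ d → 1 - s ≤ ⟪w, v⟫ := by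
    intro v hv
    have hvz := (forall_inner_snoc_nonpos_iff A d v 1).2 (by rwa [one_smul]) z hz
    have hve : ⟪snoc v 1, e - z⟫ = ⟪v, w⟫ + s := by rw [hr, inner_snoc_snoc, one_mul]
    rw [inner_sub_right, he, single_last_eq_snoc, inner_snoc_snoc, inner_zero_right] at hve
    rw [real_inner_comm]
    linarith
  refine ⟨hγ, s⁻¹ • w, ?_, ?_, fun v hv => ?_⟩
  · rw [← hs, hr, smul_snoc, inv_mul_cancel₀ hs0.ne']
  · intro i
    have hi := hAw i
    simp only [WithLp.ofLp_smul, mulVec_smul, Pi.smul_apply, smul_eq_mul] at hi ⊢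
    exact (inv_mul_le_iff₀ hs0).2 hi
  · calc (0 : ℝ) ≤ s⁻¹ * (⟪w, v⟫ - (1 - s)) :=
          mul_nonneg (inv_nonneg.2 hs0.le) (by linarith [hwv v hv])
      _ = ⟪s⁻¹ • w, v - s⁻¹ • w⟫ := by
        rw [inner_sub_right, real_inner_smul_left, real_inner_smul_left, real_inner_smul_right,
          hww]
        field_simp

end Homogenization

theorem conic_projection_solves_lp_general
    (m n : ℕ) (A : Matrix (Fin m) (Fin n) ℝ) (b : Fin m → ℝ)
    (X : Set (EuclideanSpace ℝ (Fin n)))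
    (hX : X = {x : EuclideanSpace ℝ (Fin n) | A.mulVec x ≤ b})
    (c xstar : EuclideanSpace ℝ (Fin n))
    (hopt : xstar ∈ X ∧ ∀ y ∈ X, ⟪c, xstar⟫ ≤ ⟪c, y⟫)
    (x0 : EuclideanSpace ℝ (Fin n)) (θc θ : ℝ) (hθ : θc ≤ θ)
    (hproj : ∀ θ' : ℝ, θc ≤ θ' →
      ∀ z ∈ X, dist (x0 - θ' • c) xstar ≤ dist (x0 - θ' • c) z)
    (bc : Fin m → ℝ) (hbc : bc = b - A.mulVec (x0 - θ • c))
    (Abarc : Matrix (Fin m) (Fin (n + 1)) ℝ)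
    (hAbarc : Abarc = Matrix.of fun i => Fin.snoc (A i) (-(bc i)))
    (Kc : Set (EuclideanSpace ℝ (Fin (n + 1))))
    (hKc : Kc = {z : EuclideanSpace ℝ (Fin (n + 1)) | ∃ u : Fin m → ℝ, 0 ≤ u ∧
        z = (WithLp.equiv 2 (Fin (n + 1) → ℝ)).symm (Abarc.transpose.mulVec u)})
    (ebar : EuclideanSpace ℝ (Fin (n + 1)))
    (hebar : ebar = EuclideanSpace.single (Fin.last n) 1)
    (zstar : EuclideanSpace ℝ (Fin (n + 1)))
    (hzstar : zstar ∈ Kc ∧ ∀ z ∈ Kc, dist ebar zstar ≤ dist ebar z)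
    (γ : ℝ) (hγ : γ = ‖zstar - ebar‖) :
    0 < γ ∧
      ∃ y : EuclideanSpace ℝ (Fin n),
        (γ ^ 2)⁻¹ • (ebar - zstar) =
            (WithLp.equiv 2 (Fin (n + 1) → ℝ)).symm (Fin.snoc y 1) ∧
        xstar = y + x0 - θ • c := by
  subst hX hbc hAbarc hKc hebar hγ
  set xθ := x0 - θ • c
  have hxX := hopt.1
  obtain ⟨hγ, y, hy, hyP, hymin⟩ := exists_minNorm_of_nearest_rowCone A (b - A *ᵥ xθ)
    ⟨xstar - xθ, (mulVec_sub_le_sub_mulVec_iff A b _ _).2 hxX⟩ hzstar.1 hzstar.2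
  refine ⟨hγ, y, hy, ?_⟩
  have hyX : A *ᵥ (y + xθ) ≤ b := by
    rw [← mulVec_sub_le_sub_mulVec_iff A b _ xθ]
    simpa using hyP
  have hy_opt : ⟪xθ - (y + xθ), xstar - (y + xθ)⟫ ≤ 0 := by
    rw [show xθ - (y + xθ) = -y by abel, show xstar - (y + xθ) = (xstar - xθ) - y by abel,
      inner_neg_left, neg_nonpos]
    exact hymin _ ((mulVec_sub_le_sub_mulVec_iff A b _ _).2 hxX)
  have hxstar_opt := inner_sub_nonpos_of_forall_dist_le (convex_setOf_mulVec_le A b) hxX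
    (hproj θ hθ) _ hyX
  rw [← eq_of_inner_sub_nonpos hy_opt hxstar_opt, add_sub_assoc]

/-- For a nonempty bounded polyhedron `X = {x : A x ≤ b}` whose linear
program `min_{x∈X} c·x` has a unique solution `x⋆`, fix `x⁰` and `θ ≥ θ_c` where `θ_c > 0`
ensures `P_X(x⁰ − θ' c) = x⋆` for all `θ' ≥ θ_c`. With `b^c = b − A(x⁰ − θ c)`,
`Ā_c = [A | −b^c]`, `K_c = {Ā_cᵀu : u ≥ 0}`, `ē = (0,…,0,1)`, `z⋆ = P_{K_c}(ē)` and
`γ = ‖z⋆ − ē‖`: `γ > 0`, `(ē − z⋆)/γ² = (y, 1)` for some `y`, and `x⋆ = y + x⁰ − θ c`. -/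
theorem conic_projection_solves_lp
    (m n : ℕ) (A : Matrix (Fin m) (Fin n) ℝ) (b : Fin m → ℝ)
    (X : Set (EuclideanSpace ℝ (Fin n)))
    (hX : X = {x : EuclideanSpace ℝ (Fin n) | A.mulVec x ≤ b})
    (hXbdd : Bornology.IsBounded X)
    (c xstar : EuclideanSpace ℝ (Fin n))
    (hopt : xstar ∈ X ∧ ∀ y ∈ X, ⟪c, xstar⟫ ≤ ⟪c, y⟫)
    (huniq : ∀ y ∈ X, ⟪c, y⟫ = ⟪c, xstar⟫ → y = xstar)
    (x0 : EuclideanSpace ℝ (Fin n)) (θc θ : ℝ) (hθc : 0 < θc) (hθ : θc ≤ θ)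
    (hproj : ∀ θ' : ℝ, θc ≤ θ' →
      ∀ z ∈ X, dist (x0 - θ' • c) xstar ≤ dist (x0 - θ' • c) z)
    (bc : Fin m → ℝ) (hbc : bc = b - A.mulVec (x0 - θ • c))
    (Abarc : Matrix (Fin m) (Fin (n + 1)) ℝ)
    (hAbarc : Abarc = Matrix.of fun i => Fin.snoc (A i) (-(bc i)))
    (Kc : Set (EuclideanSpace ℝ (Fin (n + 1))))
    (hKc : Kc = {z : EuclideanSpace ℝ (Fin (n + 1)) | ∃ u : Fin m → ℝ, 0 ≤ u ∧
        z = (WithLp.equiv 2 (Fin (n + 1) → ℝ)).symm (Abarc.transpose.mulVec u)})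
    (ebar : EuclideanSpace ℝ (Fin (n + 1)))
    (hebar : ebar = EuclideanSpace.single (Fin.last n) 1)
    (zstar : EuclideanSpace ℝ (Fin (n + 1)))
    (hzstar : zstar ∈ Kc ∧ ∀ z ∈ Kc, dist ebar zstar ≤ dist ebar z)
    (γ : ℝ) (hγ : γ = ‖zstar - ebar‖) :
    0 < γ ∧
      ∃ y : EuclideanSpace ℝ (Fin n),
        (γ ^ 2)⁻¹ • (ebar - zstar) =
            (WithLp.equiv 2 (Fin (n + 1) → ℝ)).symm (Fin.snoc y 1) ∧
        xstar = y + x0 - θ • c :=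
  conic_projection_solves_lp_general m n A b X hX c xstar hopt x0 θc θ hθ hproj bc hbc Abarc hAbarc
    Kc hKc ebar hebar zstar hzstar γ hγ
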